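/- arXiv:2402.12213 — 2 statements merged into one kernel-verified Lean document; each statement's English description precedes it below -/
import Mathlib

section
/- Let ζ ∈ ℝ³, α, β ≥ 0, and let ξ : ℝ³ \ {0} → ℝ be C² with |∇²ξ(z)| ≤ C₀ |z|^{-α}(1 + s_ζ(z))^{-β} for all |z| ≥ ε, where ε > 0. Let R > 0 and f : ℝ³ → ℝ integrable with support in B_R, set Λ := ∫ f(y) dy, Ξ := ∫ y f(y) dy ∈ ℝ³, and M := ∫ |f(y)| dy. Then for every S > R + ε there exists C > 0 such that for all |x| ≥ S, |(ξ * f)(x) - Λ ξ(x) + Ξ · ∇ξ(x)| ≤ C |x|^{-α} (1 + s_ζ(x))^{-β} M. -/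
/-!
Fix `x` with `|x| ≥ S`. On the ball `B(x, R)`, which stays at distance `≥ S - R > ε` from the
origin, both factors of the weight `|z|^{-α}(1 + s_ζ(z))^{-β}` are comparable to their values
at `x`, because `|x| ≤ S/(S-R) · |z|` and `s_ζ` is `|ζ|`-Lipschitz. Hence the Hessian of `ξ` is
bounded on that ball by a constant times the weight at `x`, and Taylor's formula bounds
`ξ(x - y) - ξ(x) + ∇ξ(x)·y` for `|y| < R` by that bound times `R²`. Integrating this remainder
against `f` gives exactly the left-hand side.
-/

open MeasureTheory

/-- The anisotropic Oseen wake weight `s_ζ(x) = (|ζ||x| + ζ·x)/2`. -/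
noncomputable def sw (ζ x : EuclideanSpace ℝ (Fin 3)) : ℝ :=
  (‖ζ‖ * ‖x‖ + (inner ℝ ζ x : ℝ)) / 2

open Metric Function

local notation "ℝ³" => EuclideanSpace ℝ (Fin 3)

lemma sw_nonneg (ζ z : ℝ³) : 0 ≤ sw ζ z := by
  have h := real_inner_le_norm ζ (-z)
  rw [inner_neg_right, norm_neg] at h
  unfold sw
  linarith

lemma sw_le_sw_add (ζ x z : ℝ³) : sw ζ x ≤ sw ζ z + ‖ζ‖ * ‖x - z‖ := by
  have hnorm : ‖ζ‖ * (‖x‖ - ‖z‖) ≤ ‖ζ‖ * ‖x - z‖ :=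
    mul_le_mul_of_nonneg_left (norm_sub_norm_le x z) (norm_nonneg ζ)
  have hinner := real_inner_le_norm ζ (x - z)
  rw [inner_sub_right] at hinner
  unfold sw
  linarith

lemma Real.rpow_neg_le_mul_rpow_neg {a b k β : ℝ} (ha : 0 < a) (hk : 0 < k) (hab : a ≤ k * b)
    (hβ : 0 ≤ β) : b ^ (-β) ≤ k ^ β * a ^ (-β) := by
  have hb : 0 < b := pos_of_mul_pos_right (ha.trans_le hab) hk.le
  calc b ^ (-β) = k ^ β * (k * b) ^ (-β) := by
        rw [Real.mul_rpow hk.le hb.le, ← mul_assoc, ← Real.rpow_add hk, add_neg_cancel,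
          Real.rpow_zero, one_mul]
    _ ≤ k ^ β * a ^ (-β) :=
        mul_le_mul_of_nonneg_left (Real.rpow_le_rpow_of_nonpos ha hab (neg_nonpos.2 hβ))
          (Real.rpow_nonneg hk.le β)

lemma norm_rpow_mul_one_add_sw_rpow_le {ζ x z : ℝ³} {α β k r : ℝ} (hα : 0 ≤ α) (hβ : 0 ≤ β)
    (hx : 0 < ‖x‖) (hk : 0 < k) (hxz : ‖x‖ ≤ k * ‖z‖) (hr : ‖x - z‖ ≤ r) :
    ‖z‖ ^ (-α) * (1 + sw ζ z) ^ (-β)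
      ≤ k ^ α * (1 + ‖ζ‖ * r) ^ β * (‖x‖ ^ (-α) * (1 + sw ζ x) ^ (-β)) := by
  have hζr : 0 ≤ ‖ζ‖ * r := mul_nonneg (norm_nonneg ζ) ((norm_nonneg _).trans hr)
  have hsw : 1 + sw ζ x ≤ (1 + ‖ζ‖ * r) * (1 + sw ζ z) := by
    have := sw_le_sw_add ζ x z
    have := mul_le_mul_of_nonneg_left hr (norm_nonneg ζ)
    have := mul_nonneg hζr (sw_nonneg ζ z)
    nlinarith
  calc ‖z‖ ^ (-α) * (1 + sw ζ z) ^ (-β)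
      ≤ (k ^ α * ‖x‖ ^ (-α)) * ((1 + ‖ζ‖ * r) ^ β * (1 + sw ζ x) ^ (-β)) :=
        mul_le_mul (Real.rpow_neg_le_mul_rpow_neg hx hk hxz hα)
          (Real.rpow_neg_le_mul_rpow_neg (by linarith [sw_nonneg ζ x]) (by linarith) hsw hβ)
          (Real.rpow_nonneg (by linarith [sw_nonneg ζ z]) _) (by positivity)
    _ = _ := by ring

lemma norm_sub_sub_fderiv_le_of_norm_fderiv_fderiv_le {E F : Type*} [NormedAddCommGroup E]
    [NormedSpace ℝ E] [NormedAddCommGroup F] [NormedSpace ℝ F] {g : E → F} {x y : E} {r B : ℝ}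
    (hg : ContDiffOn ℝ 2 g (ball x r))
    (hB : ∀ z ∈ ball x r, ‖fderiv ℝ (fderiv ℝ g) z‖ ≤ B) (hy : y ∈ ball x r) :
    ‖g y - g x - fderiv ℝ g x (y - x)‖ ≤ B * ‖y - x‖ ^ 2 := by
  have hsub : closedBall x ‖y - x‖ ⊆ ball x r :=
    closedBall_subset_ball (by rwa [← dist_eq_norm, ← mem_ball])
  have hxs : x ∈ closedBall x ‖y - x‖ := mem_closedBall_self (norm_nonneg _)
  have hB0 : 0 ≤ B := (norm_nonneg (fderiv ℝ (fderiv ℝ g) x)).trans (hB x (hsub hxs))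
  have hdiff : ∀ z ∈ ball x r, DifferentiableAt ℝ g z := fun z hz =>
    (hg.differentiableOn two_ne_zero).differentiableAt (isOpen_ball.mem_nhds hz)
  have hdiff' : ∀ z ∈ ball x r, DifferentiableAt ℝ (fderiv ℝ g) z := fun z hz =>
    ((hg.fderiv_of_isOpen isOpen_ball (by norm_num)).differentiableOn one_ne_zero).differentiableAt
      (isOpen_ball.mem_nhds hz)
  have hgrad : ∀ z ∈ closedBall x ‖y - x‖, ‖fderiv ℝ g z - fderiv ℝ g x‖ ≤ B * ‖y - x‖ :=
    fun z hz => calc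
      ‖fderiv ℝ g z - fderiv ℝ g x‖ ≤ B * ‖z - x‖ :=
        (convex_closedBall x _).norm_image_sub_le_of_norm_fderiv_le
          (fun w hw => hdiff' w (hsub hw)) (fun w hw => hB w (hsub hw)) hxs hz
      _ ≤ B * ‖y - x‖ := by gcongr; rwa [← dist_eq_norm, ← mem_closedBall]
  calc ‖g y - g x - fderiv ℝ g x (y - x)‖ ≤ B * ‖y - x‖ * ‖y - x‖ :=
        (convex_closedBall x _).norm_image_sub_le_of_norm_fderiv_le'
          (fun w hw => hdiff w (hsub hw)) hgrad hxs (by simp [dist_eq_norm])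
    _ = B * ‖y - x‖ ^ 2 := by ring

lemma ContinuousOn.aestronglyMeasurable_of_compl_singleton {X : Type*} [TopologicalSpace X]
    [MeasurableSpace X] [OpensMeasurableSpace X] [MeasurableSingletonClass X] {μ : Measure X}
    [NullSingletonClass μ] {g : X → ℝ} {a : X} (hg : ContinuousOn g {a}ᶜ) :
    AEStronglyMeasurable g μ := by
  simpa only [restrict_compl_singleton] using
    hg.aestronglyMeasurable (μ := μ) (measurableSet_singleton a).compl

lemma norm_mul_le_of_abs_le_on_support {X : Type*} {f ρ : X → ℝ} {B : ℝ}
    (hρ : ∀ y ∈ support f, |ρ y| ≤ B) (y : X) : ‖ρ y * f y‖ ≤ B * ‖f y‖ := by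
  by_cases hy : f y = 0
  · simp [hy]
  · rw [norm_mul, Real.norm_eq_abs]
    gcongr
    exact hρ y hy

section Integrals

variable {X : Type*} [MeasurableSpace X] {μ : Measure X} {f ρ : X → ℝ} {B : ℝ}

lemma integrable_mul_of_abs_le_on_support (hf : Integrable f μ)
    (hρm : AEStronglyMeasurable ρ μ) (hρ : ∀ y ∈ support f, |ρ y| ≤ B) :
    Integrable (fun y => ρ y * f y) μ :=
  (hf.norm.const_mul B).mono' (hρm.mul hf.aestronglyMeasurable)
    (Filter.Eventually.of_forall (norm_mul_le_of_abs_le_on_support hρ))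

lemma abs_integral_mul_le_of_abs_le_on_support (hf : Integrable f μ)
    (hρ : ∀ y ∈ support f, |ρ y| ≤ B) :
    |∫ y, ρ y * f y ∂μ| ≤ B * ∫ y, |f y| ∂μ := by
  rw [← Real.norm_eq_abs, ← integral_const_mul]
  exact norm_integral_le_of_norm_le (hf.norm.const_mul B)
    (Filter.Eventually.of_forall (norm_mul_le_of_abs_le_on_support hρ))

end Integrals

section Moments

variable {E : Type*} [NormedAddCommGroup E] [NormedSpace ℝ E] [MeasurableSpace E]
  {μ : Measure E} {f : E → ℝ}

lemma integrable_smul_self_of_support_subset_ball [OpensMeasurableSpace E]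
    [SecondCountableTopology E] {R : ℝ} (hf : Integrable f μ) (hsupp : support f ⊆ ball 0 R) :
    Integrable (fun y => f y • y) μ := by
  refine (hf.norm.const_mul R).mono' (hf.aestronglyMeasurable.smul aestronglyMeasurable_id)
    (Filter.Eventually.of_forall fun y => ?_)
  by_cases hy : f y = 0
  · simp [hy]
  · have hyR := mem_ball_zero_iff.1 (hsupp (mem_support.2 hy))
    rw [norm_smul, mul_comm]
    gcongr

lemma integral_mul_sub_integral_mul_add_integral_smul [CompleteSpace E] {h : E → ℝ} (a : ℝ)
    (L : E →L[ℝ] ℝ) (hf : Integrable f μ) (hfy : Integrable (fun y => f y • y) μ)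
    (hρ : Integrable (fun y => (h y - a + L y) * f y) μ) :
    (∫ y, h y * f y ∂μ) - (∫ y, f y ∂μ) * a + L (∫ y, f y • y ∂μ)
      = ∫ y, (h y - a + L y) * f y ∂μ := by
  have hsum : Integrable (fun y => (h y - a + L y) * f y + a * f y) μ := hρ.add (hf.const_mul a)
  have hsplit : ∫ y, h y * f y ∂μ
      = (∫ y, (h y - a + L y) * f y ∂μ) + (∫ y, a * f y ∂μ) - ∫ y, L (f y • y) ∂μ := by
    rw [← integral_add hρ (hf.const_mul a), ← integral_sub hsum (L.integrable_comp hfy)]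
    congr 1 with y
    simp only [map_smul, smul_eq_mul]
    ring
  rw [hsplit, integral_const_mul, L.integral_comp_comm hfy]
  ring

end Moments

lemma norm_fderiv_fderiv_le_of_mem_ball {ζ x : ℝ³} {α β ε C₀ R S : ℝ} {ξ : ℝ³ → ℝ}
    (hα : 0 ≤ α) (hβ : 0 ≤ β) (hε : 0 ≤ ε) (hC₀ : 0 ≤ C₀) (hR : 0 ≤ R)
    (hhess : ∀ z : ℝ³, ε ≤ ‖z‖ →
      ‖fderiv ℝ (fderiv ℝ ξ) z‖ ≤ C₀ * ‖z‖ ^ (-α) * (1 + sw ζ z) ^ (-β))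
    (hS : R + ε < S) (hx : S ≤ ‖x‖) :
    ∀ z ∈ ball x R, ‖fderiv ℝ (fderiv ℝ ξ) z‖
      ≤ C₀ * (S / (S - R)) ^ α * (1 + ‖ζ‖ * R) ^ β * (‖x‖ ^ (-α) * (1 + sw ζ x) ^ (-β)) := by
  intro z hz
  have hxz : ‖x - z‖ < R := by rw [← dist_eq_norm, dist_comm]; exact hz
  have hzx : ‖x‖ - R < ‖z‖ := by linarith [norm_sub_norm_le x z]
  have hSR : 0 < S - R := by linarith
  have hnorm : ‖x‖ ≤ S / (S - R) * ‖z‖ := by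
    rw [div_mul_eq_mul_div, le_div_iff₀ hSR]
    nlinarith
  calc ‖fderiv ℝ (fderiv ℝ ξ) z‖ ≤ C₀ * (‖z‖ ^ (-α) * (1 + sw ζ z) ^ (-β)) := by
        rw [← mul_assoc]; exact hhess z (by linarith)
    _ ≤ C₀ * ((S / (S - R)) ^ α * (1 + ‖ζ‖ * R) ^ β * (‖x‖ ^ (-α) * (1 + sw ζ x) ^ (-β))) :=
        mul_le_mul_of_nonneg_left
          (norm_rpow_mul_one_add_sw_rpow_le hα hβ (by linarith) (div_pos (by linarith) hSR) hnorm hxz.le) hC₀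
    _ = _ := by ring

/-- If `ξ` is `C²` away from the origin with
`|∇²ξ(z)| ≤ C₀|z|^{-α}(1+s_ζ(z))^{-β}` for `|z| ≥ ε`, and `f` is integrable with
support in `B_R`, set `Λ = ∫ f`, `Ξ = ∫ y f(y) dy`, `M = ∫ |f|`. Then for every
`S > R + ε` there is `C > 0` such that for `|x| ≥ S`,
`|(ξ*f)(x) - Λξ(x) + Ξ·∇ξ(x)| ≤ C |x|^{-α} (1+s_ζ(x))^{-β} M`. -/
theorem stmt_10 (ζ : EuclideanSpace ℝ (Fin 3)) (α β : ℝ) (hα : 0 ≤ α) (hβ : 0 ≤ β)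
    (ε : ℝ) (hε : 0 < ε)
    (ξ : EuclideanSpace ℝ (Fin 3) → ℝ) (hξ : ContDiffOn ℝ 2 ξ {0}ᶜ)
    (C₀ : ℝ) (hC₀ : 0 < C₀)
    (hhess : ∀ z : EuclideanSpace ℝ (Fin 3), ε ≤ ‖z‖ →
      ‖fderiv ℝ (fderiv ℝ ξ) z‖ ≤ C₀ * ‖z‖ ^ (-α) * (1 + sw ζ z) ^ (-β))
    (R : ℝ) (hR : 0 < R) (f : EuclideanSpace ℝ (Fin 3) → ℝ) (hf : Integrable f)
    (hsupp : Function.support f ⊆ Metric.ball 0 R)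
    (S : ℝ) (hS : R + ε < S) :
    ∃ C > (0:ℝ), ∀ x : EuclideanSpace ℝ (Fin 3), S ≤ ‖x‖ →
      |(∫ y, ξ (x - y) * f y) - (∫ y, f y) * ξ x
          + (inner ℝ (∫ y, f y • y) (gradient ξ x) : ℝ)|
        ≤ C * ‖x‖ ^ (-α) * (1 + sw ζ x) ^ (-β) * (∫ y, |f y|) := by
  have hk : 0 < S / (S - R) := div_pos (by linarith) (by linarith)
  refine ⟨C₀ * (S / (S - R)) ^ α * (1 + ‖ζ‖ * R) ^ β * R ^ 2,
    by have := Real.rpow_pos_of_pos hk α; positivity, fun x hx => ?_⟩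
  set B := C₀ * (S / (S - R)) ^ α * (1 + ‖ζ‖ * R) ^ β * (‖x‖ ^ (-α) * (1 + sw ζ x) ^ (-β))
  have hball : ball x R ⊆ {0}ᶜ := fun z hz hz0 => by
    rw [Set.mem_singleton_iff.1 hz0, mem_ball, dist_zero_left] at hz
    linarith
  have hB : ∀ z ∈ ball x R, ‖fderiv ℝ (fderiv ℝ ξ) z‖ ≤ B :=
    norm_fderiv_fderiv_le_of_mem_ball hα hβ hε.le hC₀.le hR.le hhess hS hx
  have hremainder : ∀ y ∈ support f, |ξ (x - y) - ξ x + fderiv ℝ ξ x y| ≤ B * R ^ 2 := by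
    intro y hy
    have hyR : ‖y‖ < R := mem_ball_zero_iff.1 (hsupp hy)
    have htaylor := norm_sub_sub_fderiv_le_of_norm_fderiv_fderiv_le (hξ.mono hball) hB
      (y := x - y) (by rwa [mem_ball, dist_eq_norm, sub_sub_cancel_left, norm_neg])
    rw [sub_sub_cancel_left, map_neg, sub_neg_eq_add, norm_neg, Real.norm_eq_abs] at htaylor
    have hB0 : 0 ≤ B := (norm_nonneg (fderiv ℝ (fderiv ℝ ξ) x)).trans (hB x (mem_ball_self hR))
    exact htaylor.trans (by gcongr)
  have hmeas : AEStronglyMeasurable (fun y => ξ (x - y) - ξ x + fderiv ℝ ξ x y) volume := by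
    refine ((ContinuousOn.aestronglyMeasurable_of_compl_singleton (a := x) ?_).sub
      aestronglyMeasurable_const).add (fderiv ℝ ξ x).continuous.aestronglyMeasurable
    exact hξ.continuousOn.comp (continuous_const.sub continuous_id).continuousOn
      fun y hy => sub_ne_zero.2 (Ne.symm hy)
  rw [real_inner_comm, inner_gradient_left, integral_mul_sub_integral_mul_add_integral_smul _ _ hf
    (integrable_smul_self_of_support_subset_ball hf hsupp)
    (integrable_mul_of_abs_le_on_support hf hmeas hremainder)]
  calc _ ≤ B * R ^ 2 * ∫ y, |f y| := abs_integral_mul_le_of_abs_le_on_support hf hremainder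
    _ = _ := by ring
end

section
/- Let R* > 0 and let χ ∈ C_c^∞(ℝ³) with χ = 1 on B_{R*/2} and χ = 0 outside B_{R*}. Suppose h : ℝ³ → ℝ satisfies |h(y)| ≤ M ((1+|y|)(1+s_ζ(y)))^{-2} and K : ℝ³ \ {0} → ℝ satisfies |K(z)| ≤ C₀ |z|^{-2} for z ≠ 0. Then there is C > 0 such that for all |x| ≥ 2R*, |∫ (∇χ)(x-y) K(x-y) h(y) dy| ≤ C M ((|x|)(1+s_ζ(x)))^{-2}. -/
open MeasureTheory

lemma sw_nonneg_s19 (ζ x : EuclideanSpace ℝ (Fin 3)) : 0 ≤ sw ζ x := by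
  have h1 : |(inner ℝ ζ x : ℝ)| ≤ ‖ζ‖ * ‖x‖ := abs_real_inner_le_norm ζ x
  have := neg_abs_le (inner ℝ ζ x : ℝ)
  unfold sw; linarith

lemma rpow_neg_two_eq (t : ℝ) (ht : 0 ≤ t) : t ^ (-(2:ℝ)) = (t ^ 2)⁻¹ := by
  rw [Real.rpow_neg ht]
  norm_num

/-- Cutoff-commutator estimate: if `χ` is a smooth cutoff equal to `1` on `B_{R*/2}` and
vanishing outside `B_{R*}`, `|h(y)| ≤ M((1+|y|)(1+s_ζ(y)))⁻²` and `|K(z)| ≤ C₀|z|⁻²`,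
then for `|x| ≥ 2R*`,
`|∫ (∇χ)(x-y) K(x-y) h(y) dy| ≤ C M (|x|(1+s_ζ(x)))⁻²`. -/
theorem stmt_19 (ζ : EuclideanSpace ℝ (Fin 3)) (Rs : ℝ) (hRs : 0 < Rs)
    (χ : EuclideanSpace ℝ (Fin 3) → ℝ) (hχ : ContDiff ℝ (⊤ : ℕ∞) χ) (hχc : HasCompactSupport χ)
    (hχ1 : ∀ z : EuclideanSpace ℝ (Fin 3), ‖z‖ ≤ Rs / 2 → χ z = 1)
    (hχ0 : ∀ z : EuclideanSpace ℝ (Fin 3), Rs < ‖z‖ → χ z = 0)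
    (h : EuclideanSpace ℝ (Fin 3) → ℝ) (M C₀ : ℝ) (hM : 0 < M) (hC₀ : 0 < C₀)
    (hh : ∀ y, |h y| ≤ M * ((1 + ‖y‖) * (1 + sw ζ y)) ^ (-(2:ℝ)))
    (K : EuclideanSpace ℝ (Fin 3) → ℝ)
    (hK : ∀ z : EuclideanSpace ℝ (Fin 3), z ≠ 0 → |K z| ≤ C₀ * ‖z‖ ^ (-(2:ℝ))) :
    ∃ C > (0:ℝ), ∀ x : EuclideanSpace ℝ (Fin 3), 2 * Rs ≤ ‖x‖ →
      ‖∫ y, (K (x - y) * h y) • gradient χ (x - y)‖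
        ≤ C * M * (‖x‖ * (1 + sw ζ x)) ^ (-(2:ℝ)) := by
  classical
  -- gradient vanishes on small balls and outside B_Rs
  have hgrad0_in : ∀ z : EuclideanSpace ℝ (Fin 3), ‖z‖ < Rs / 2 → gradient χ z = 0 := by
    intro z hz
    have hev : χ =ᶠ[nhds z] fun _ => (1:ℝ) := by
      have hopen : IsOpen {w : EuclideanSpace ℝ (Fin 3) | ‖w‖ < Rs / 2} := isOpen_lt continuous_norm continuous_const
      filter_upwards [hopen.mem_nhds hz] with w hw using hχ1 w (le_of_lt hw)
    rw [hev.gradient_eq]; exact gradient_fun_const _ _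
  have hgrad0_out : ∀ z : EuclideanSpace ℝ (Fin 3), Rs < ‖z‖ → gradient χ z = 0 := by
    intro z hz
    have hev : χ =ᶠ[nhds z] fun _ => (0:ℝ) := by
      have hopen : IsOpen {w : EuclideanSpace ℝ (Fin 3) | Rs < ‖w‖} := isOpen_lt continuous_const continuous_norm
      filter_upwards [hopen.mem_nhds hz] with w hw using hχ0 w hw
    rw [hev.gradient_eq]; exact gradient_fun_const _ _
  -- gradient is continuous
  have hgc : Continuous (gradient χ) := by
    have h1 : Continuous (fderiv ℝ χ) := hχ.continuous_fderiv (by simp)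
    exact (InnerProductSpace.toDual ℝ (EuclideanSpace ℝ (Fin 3))).symm.continuous.comp h1
  -- bound on the gradient on the closed ball
  obtain ⟨G, hG⟩ := (isCompact_closedBall (0:EuclideanSpace ℝ (Fin 3)) Rs).exists_bound_of_continuousOn
    (hgc.continuousOn)
  have hG0 : 0 ≤ G :=
    le_trans (norm_nonneg _) (hG 0 (by simp [hRs.le]))
  set A : ℝ := 2 * (1 + ‖ζ‖ * Rs) with hA
  have hA1 : 1 ≤ A := by
    have := norm_nonneg ζ
    have : 0 ≤ ‖ζ‖ * Rs := mul_nonneg (norm_nonneg ζ) hRs.le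
    simp only [hA]; linarith
  have hA0 : 0 < A := lt_of_lt_of_le one_pos hA1
  set V : ℝ := (volume (Metric.closedBall (0:EuclideanSpace ℝ (Fin 3)) Rs)).toReal with hV
  have hV0 : 0 ≤ V := ENNReal.toReal_nonneg
  refine ⟨C₀ * ((Rs / 2) ^ 2)⁻¹ * (G + 1) * A ^ 2 * V + 1, by positivity, ?_⟩
  intro x hx
  set w : ℝ := (‖x‖ * (1 + sw ζ x)) ^ (-(2:ℝ)) with hw
  have hx0 : 0 < ‖x‖ := lt_of_lt_of_le (by linarith) hx
  have hswx : 0 ≤ sw ζ x := sw_nonneg_s19 ζ x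
  have hQ0 : 0 < ‖x‖ * (1 + sw ζ x) := by positivity
  have hw0 : 0 ≤ w := Real.rpow_nonneg hQ0.le _
  -- the key pointwise weight comparison
  have hweight : ∀ y : EuclideanSpace ℝ (Fin 3), ‖x - y‖ ≤ Rs →
      ((1 + ‖y‖) * (1 + sw ζ y)) ^ (-(2:ℝ)) ≤ A ^ 2 * w := by
    intro y hxy
    have hswy : 0 ≤ sw ζ y := sw_nonneg_s19 ζ y
    have hP0 : 0 < (1 + ‖y‖) * (1 + sw ζ y) := by positivity
    -- ‖x‖ ≤ 2 (1 + ‖y‖)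
    have h1 : ‖x‖ ≤ 2 * (1 + ‖y‖) := by
      have := norm_sub_norm_le x y
      have hy : ‖x‖ - Rs ≤ ‖y‖ := by linarith
      linarith [norm_nonneg y]
    -- 1 + sw x ≤ (1 + ‖ζ‖ Rs)(1 + sw y)
    have h2 : 1 + sw ζ x ≤ (1 + ‖ζ‖ * Rs) * (1 + sw ζ y) := by
      have hinner : (inner ℝ ζ x : ℝ) - inner ℝ ζ y = inner ℝ ζ (x - y) := by
        rw [inner_sub_right]
      have hi : (inner ℝ ζ (x - y) : ℝ) ≤ ‖ζ‖ * ‖x - y‖ := real_inner_le_norm ζ (x - y)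
      have hn : ‖x‖ - ‖y‖ ≤ ‖x - y‖ := norm_sub_norm_le x y
      have hd : sw ζ x - sw ζ y ≤ ‖ζ‖ * ‖x - y‖ := by
        unfold sw
        rw [div_sub_div_same, div_le_iff₀ (by norm_num : (0:ℝ) < 2)]
        have hz0 : 0 ≤ ‖ζ‖ := norm_nonneg ζ
        nlinarith [mul_le_mul_of_nonneg_left hn hz0]
      have hzr : ‖ζ‖ * ‖x - y‖ ≤ ‖ζ‖ * Rs :=
        mul_le_mul_of_nonneg_left hxy (norm_nonneg ζ)
      nlinarith [mul_nonneg (mul_nonneg (norm_nonneg ζ) hRs.le) hswy]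
    have hQP : ‖x‖ * (1 + sw ζ x) ≤ (1 + ‖y‖) * (1 + sw ζ y) * A := by
      have := mul_le_mul h1 h2 (by linarith) (by positivity)
      calc ‖x‖ * (1 + sw ζ x) ≤ (2 * (1 + ‖y‖)) * ((1 + ‖ζ‖ * Rs) * (1 + sw ζ y)) := this
        _ = (1 + ‖y‖) * (1 + sw ζ y) * A := by ring
    rw [rpow_neg_two_eq _ hP0.le, hw, rpow_neg_two_eq _ hQ0.le]
    rw [← div_le_iff₀' (by positivity), div_eq_mul_inv, ← mul_inv, ← mul_pow]
    apply inv_anti₀ (by positivity)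
    exact pow_le_pow_left₀ hQ0.le hQP 2
  -- the pointwise bound on the integrand
  set B : ℝ := (C₀ * ((Rs / 2) ^ 2)⁻¹) * (M * (A ^ 2 * w)) * (G + 1) with hB
  have hB0 : 0 ≤ B := by positivity
  set f : EuclideanSpace ℝ (Fin 3) → EuclideanSpace ℝ (Fin 3) := fun y => (K (x - y) * h y) • gradient χ (x - y) with hf
  have hbound : ∀ y : EuclideanSpace ℝ (Fin 3), ‖f y‖ ≤ (Metric.closedBall x Rs).indicator (fun _ => B) y := by
    intro y
    by_cases hmem : y ∈ Metric.closedBall x Rs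
    · rw [Set.indicator_of_mem hmem]
      have hxy : ‖x - y‖ ≤ Rs := by
        rw [← norm_sub_rev]; exact Metric.mem_closedBall.1 hmem
      by_cases hgz : gradient χ (x - y) = 0
      · simp [hf, hgz, hB0]
      · have hge : Rs / 2 ≤ ‖x - y‖ := by
          by_contra hc; exact hgz (hgrad0_in _ (lt_of_not_ge hc))
        have hne : x - y ≠ 0 := by
          intro hc; rw [hc, norm_zero] at hge; linarith
        have hKb : |K (x - y)| ≤ C₀ * ((Rs / 2) ^ 2)⁻¹ := by
          calc |K (x - y)| ≤ C₀ * ‖x - y‖ ^ (-(2:ℝ)) := hK _ hne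
            _ ≤ C₀ * ((Rs / 2) ^ 2)⁻¹ := by
                rw [rpow_neg_two_eq _ (norm_nonneg _)]
                apply mul_le_mul_of_nonneg_left _ hC₀.le
                apply inv_anti₀ (by positivity)
                exact pow_le_pow_left₀ (by linarith) hge 2
        have hhb : |h y| ≤ M * (A ^ 2 * w) := by
          calc |h y| ≤ M * ((1 + ‖y‖) * (1 + sw ζ y)) ^ (-(2:ℝ)) := hh y
            _ ≤ M * (A ^ 2 * w) := mul_le_mul_of_nonneg_left (hweight y hxy) hM.le
        have hgb : ‖gradient χ (x - y)‖ ≤ G + 1 := by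
          have : x - y ∈ Metric.closedBall (0:EuclideanSpace ℝ (Fin 3)) Rs := by
            simp [Metric.mem_closedBall, dist_zero_right, hxy]
          linarith [hG _ this]
        have hnorm : ‖f y‖ = |K (x - y)| * |h y| * ‖gradient χ (x - y)‖ := by
          simp [hf, norm_smul, abs_mul]
        rw [hnorm, hB]
        apply mul_le_mul _ hgb (norm_nonneg _) (by positivity)
        exact mul_le_mul hKb hhb (abs_nonneg _) (by positivity)
    · rw [Set.indicator_of_notMem hmem]
      have hxy : Rs < ‖x - y‖ := by
        rw [← norm_sub_rev]
        exact lt_of_not_ge (fun hc => hmem (Metric.mem_closedBall.2 hc))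
      simp [hf, hgrad0_out _ hxy]
  by_cases hint : Integrable f
  · have hind : Integrable ((Metric.closedBall x Rs).indicator (fun _ => B)) := by
      rw [integrable_indicator_iff measurableSet_closedBall]
      exact integrableOn_const measure_closedBall_lt_top.ne
    calc ‖∫ y, f y‖ ≤ ∫ y, ‖f y‖ := norm_integral_le_integral_norm f
      _ ≤ ∫ y, (Metric.closedBall x Rs).indicator (fun _ => B) y :=
          integral_mono hint.norm hind hbound
      _ = (volume (Metric.closedBall x Rs)).toReal • B := by
          rw [integral_indicator_const _ measurableSet_closedBall]; rfl
      _ = V * B := by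
          rw [smul_eq_mul, hV, Measure.addHaar_closedBall_center]
      _ ≤ (C₀ * ((Rs / 2) ^ 2)⁻¹ * (G + 1) * A ^ 2 * V + 1) * M * w := by
          have he : V * B = (C₀ * ((Rs / 2) ^ 2)⁻¹ * (G + 1) * A ^ 2 * V) * M * w := by
            rw [hB]; ring
          rw [he]
          nlinarith [mul_nonneg hM.le hw0]
  · rw [integral_undef hint]
    simp only [norm_zero]
    positivity
end
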